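/- arXiv:2501.07829 — 2 statements merged into one kernel-verified Lean document; each statement's English description precedes it below -/
import Mathlib

section
/- The monomial ideal J = (x_1^2, x_1x_2, x_2^2, x_1x_3, x_1x_4) in S = k[x_1,...,x_n] with n ≥ 4 is of Borel type, but J is not the initial ideal (with respect to graded reverse lexicographic order) of any homogeneous prime ideal of S. -/
open MvPolynomial Finsupp Module

namespace Paper

variable {k : Type*} [Field k] {n : ℕ}

/-- `J` is a monomial ideal: generated by a set of monomials. -/
def IsMonomialIdeal (J : Ideal (MvPolynomial (Fin n) k)) : Prop :=
  ∃ G : Set (Fin n →₀ ℕ),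
    J = Ideal.span ((fun d => (monomial d (1:k) : MvPolynomial (Fin n) k)) '' G)

/-- The Borel-type condition: for `i < j` and a monomial `x^d ∈ J` with `x_j ∣ x^d`,
some `x_i^s · x^d / x_j` lies in `J`. -/
def BorelCond (J : Ideal (MvPolynomial (Fin n) k)) : Prop :=
  ∀ i j : Fin n, i < j → ∀ d : Fin n →₀ ℕ,
    (monomial d (1:k) : MvPolynomial (Fin n) k) ∈ J → d j ≠ 0 →
    ∃ s : ℕ,
      (monomial (d + Finsupp.single i s - Finsupp.single j 1) (1:k) :
        MvPolynomial (Fin n) k) ∈ J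

/-- `J` is a monomial ideal of Borel type. -/
def IsBorelType (J : Ideal (MvPolynomial (Fin n) k)) : Prop :=
  IsMonomialIdeal J ∧ BorelCond J

/-- The saturation `J : I^∞`. -/
noncomputable def sat (J I : Ideal (MvPolynomial (Fin n) k)) : Ideal (MvPolynomial (Fin n) k) :=
  ⨆ m : ℕ, Submodule.colon J ((I ^ m) : Ideal (MvPolynomial (Fin n) k))

/-- The product of the variables with (0-based) index `≥ r`, i.e. `x_{r+1} ⋯ x_n`. -/
noncomputable def tailProd (k : Type*) [Field k] (n r : ℕ) : MvPolynomial (Fin n) k :=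
  ∏ i ∈ Finset.univ.filter (fun i : Fin n => r ≤ (i : ℕ)), X i

/-- `Φ_r(J) = J : (x_{r+1} ⋯ x_n)^∞`. -/
noncomputable def Phi (r : ℕ) (J : Ideal (MvPolynomial (Fin n) k)) :
    Ideal (MvPolynomial (Fin n) k) :=
  sat J (Ideal.span {tailProd k n r})

/-- The projection `Π_r : k[x_1,…,x_n] → k[x_1,…,x_r]` sending `x_{r+1},…,x_n` to `0`. -/
noncomputable def projDown (k : Type*) [Field k] (n r : ℕ) :
    MvPolynomial (Fin n) k →ₐ[k] MvPolynomial (Fin r) k :=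
  aeval (fun i : Fin n => if h : (i : ℕ) < r then X ⟨i, h⟩ else 0)

/-- `Π_r(J)`, the image ideal of `J` in `k[x_1,…,x_r]`. -/
noncomputable def PiIdeal (r : ℕ) (J : Ideal (MvPolynomial (Fin n) k)) :
    Ideal (MvPolynomial (Fin r) k) :=
  J.map (projDown k n r).toRingHom

/-- The exponent `d` is a minimal generator of the monomial ideal `J`. -/
def IsMinGen (J : Ideal (MvPolynomial (Fin n) k)) (d : Fin n →₀ ℕ) : Prop :=
  (monomial d (1:k) : MvPolynomial (Fin n) k) ∈ J ∧
    ∀ d' : Fin n →₀ ℕ, d' ≤ d →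
      (monomial d' (1:k) : MvPolynomial (Fin n) k) ∈ J → d' = d

/-- The leading exponent of a polynomial with respect to a monomial order. -/
noncomputable def leadExp (m : MonomialOrder (Fin n)) (f : MvPolynomial (Fin n) k) :
    Fin n →₀ ℕ :=
  m.toSyn.symm (f.support.sup fun d => m.toSyn d)

/-- The initial ideal of `P` with respect to the monomial order `m`. -/
noncomputable def initialIdeal (m : MonomialOrder (Fin n)) (P : Ideal (MvPolynomial (Fin n) k)) :
    Ideal (MvPolynomial (Fin n) k) :=
  Ideal.span {g | ∃ f ∈ P, f ≠ 0 ∧ g = (monomial (leadExp m f) (1:k) : MvPolynomial (Fin n) k)}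

/-- A homogeneous ideal: closed under taking homogeneous components. -/
def IsHomogIdeal (P : Ideal (MvPolynomial (Fin n) k)) : Prop :=
  ∀ f ∈ P, ∀ i : ℕ, homogeneousComponent i f ∈ P

/-- The ideal generated by the variables `x_1, …, x_{i+1}` (0-based indices `≤ i`). -/
noncomputable def varIdealLe (k : Type*) [Field k] {n : ℕ} (i : Fin n) :
    Ideal (MvPolynomial (Fin n) k) :=
  Ideal.span ((fun j : Fin n => (X j : MvPolynomial (Fin n) k)) '' {j | j ≤ i})

/-- The Hilbert series of `S/I` as a power series with integer coefficients. -/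
noncomputable def hilb {N : ℕ} (I : Ideal (MvPolynomial (Fin N) k)) : PowerSeries ℤ :=
  PowerSeries.mk fun i =>
    (Module.finrank k (Submodule.map (Ideal.Quotient.mkₐ k I).toLinearMap
      (homogeneousSubmodule (Fin N) k i)) : ℤ)

/-- The `i`-th Hilbert coefficient read off from the numerator polynomial `q`:
the coefficient of `(t-1)^i` in `q`. -/
noncomputable def hc (q : Polynomial ℤ) (i : ℕ) : ℤ :=
  (Polynomial.taylor 1 q).coeff i

/-- The Krull dimension of the quotient ring `S/I`. -/
noncomputable def qdim {N : ℕ} (I : Ideal (MvPolynomial (Fin N) k)) : WithBot (WithTop ℕ) :=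
  ringKrullDim (MvPolynomial (Fin N) k ⧸ I)

/-- The embedding `k[x_1,…,x_r] → k[x_1,…,x_n]`. -/
noncomputable def inclUp (k : Type*) [Field k] {r n : ℕ} (h : r ≤ n) :
    MvPolynomial (Fin r) k →ₐ[k] MvPolynomial (Fin n) k :=
  rename (Fin.castLE h)

/-- The embedding of variables for the tail subring `k[x_{r+1},…,x_n]`. -/
def tailEmb (n r : ℕ) (h : r ≤ n) : Fin (n - r) → Fin n :=
  fun j => ⟨r + j.1, by omega⟩

/-- The inclusion `k[x_{r+1},…,x_n] → k[x_1,…,x_n]` as a ring hom. -/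
noncomputable def tailIncl (k : Type*) [Field k] {n : ℕ} (r : ℕ) (h : r ≤ n) :
    MvPolynomial (Fin (n - r)) k →+* MvPolynomial (Fin n) k :=
  (rename (tailEmb n r h)).toRingHom

/-- `J₁ = (J ∩ k[x_1,…,x_r])S`: the ideal generated by the monomials of `J`
lying in `k[x_1,…,x_r]`. -/
noncomputable def Jone (r : ℕ) (J : Ideal (MvPolynomial (Fin n) k)) :
    Ideal (MvPolynomial (Fin n) k) :=
  Ideal.span {g | ∃ d : Fin n →₀ ℕ, (∀ i : Fin n, r ≤ (i : ℕ) → d i = 0) ∧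
    (monomial d (1:k) : MvPolynomial (Fin n) k) ∈ J ∧
    g = (monomial d (1:k) : MvPolynomial (Fin n) k)}

/-- The quotient module `J₂/J₁` for ideals `J₁ ≤ J₂`. -/
abbrev quotMod (J₁ J₂ : Ideal (MvPolynomial (Fin n) k)) :=
  (J₂ : Submodule (MvPolynomial (Fin n) k) (MvPolynomial (Fin n) k)) ⧸
    (Submodule.comap
      (J₂ : Submodule (MvPolynomial (Fin n) k) (MvPolynomial (Fin n) k)).subtype
      (J₁ : Submodule (MvPolynomial (Fin n) k) (MvPolynomial (Fin n) k)))

/-- `J₂/J₁` as a module over `k[x_{r+1},…,x_n]`. -/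
noncomputable def quotModTail (r : ℕ) (h : r ≤ n) (J₁ J₂ : Ideal (MvPolynomial (Fin n) k)) :
    Module (MvPolynomial (Fin (n - r)) k) (quotMod J₁ J₂) :=
  Module.compHom _ (tailIncl k r h)

/-- The degrevlex property of a monomial order: compare total degrees first, and break
ties by the *last* variable in which the exponents differ, where *larger* exponent
means *smaller* monomial. -/
def IsDegRevLex (m : MonomialOrder (Fin n)) : Prop :=
  ∀ a b : Fin n →₀ ℕ, (m.toSyn a < m.toSyn b) ↔
    ((a.sum fun _ e => e) < (b.sum fun _ e => e) ∨
      ((a.sum fun _ e => e) = (b.sum fun _ e => e) ∧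
        ∃ i : Fin n, b i < a i ∧ ∀ j : Fin n, i < j → a j = b j))

end Paper

/-!
Borel type: the condition only has to be checked on the generators `x^e` of `J`, and there
`x_i² x^e / x_j` is always divisible by `x₁ x_i ∈ J`, because `i < j ≤ 4`.

No prime: suppose `in(P) = J` with `P` prime, and take `f, f' ∈ P` with leading monomials
`x₁x₃` and `x₁x₄` (the variables `x₁, …, x₄` are indexed `i₀, …, i₃` below). For degrevlex,
every monomial below `x₁x₃` or `x₁x₄` has degree `≤ 2` and degree `≤ 1` in `x₁, x₂` together,
so `f = x₁A + B` and `f' = x₁A' + B'` with `A, A'` of total degree `≤ 1` free of `x₁, x₂`, and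
`B, B'` free of `x₁` and of degree `≤ 1` in `x₂`. The leading monomial of
`A'f - Af' = A'B - AB' ∈ P` would lie outside `J`, so `A'f = Af'`. Now `A` has total degree one
(it contains `x₃`), hence is prime, and does not divide `A'` (which has no `x₃` term, as
`x₁x₄ < x₁x₃`), so `A ∣ f`. Since all generators of `J` have degree two, every nonzero element
of `P` has total degree `≥ 2`; writing `f = A·s`, neither `A` nor `s` lies in `P`, a
contradiction.
-/

namespace Finsupp

variable {σ : Type*}

theorem sum_le_degree (v : σ →₀ ℕ) (s : Finset σ) : ∑ i ∈ s, v i ≤ v.degree :=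
  Finset.sum_le_sum_of_ne_zero fun _ _ hi => mem_support_iff.mpr hi

theorem eq_of_le_of_degree_le {d u : σ →₀ ℕ} (h : d ≤ u) (hdeg : u.degree ≤ d.degree) :
    d = u := by
  obtain ⟨c, rfl⟩ := exists_add_of_le h
  rw [map_add] at hdeg
  rw [(degree_eq_zero_iff c).mp (by omega), add_zero]

end Finsupp

namespace MvPolynomial

variable {σ k : Type*} [Field k]

theorem monomial_mem_span_monomial_image_iff {G : Set (σ →₀ ℕ)} {d : σ →₀ ℕ} :
    monomial d (1 : k) ∈ Ideal.span ((fun e => monomial e (1 : k)) '' G) ↔ ∃ e ∈ G, e ≤ d := by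
  classical
  rw [mem_ideal_span_monomial_image, support_monomial, if_neg one_ne_zero]
  simp

theorem totalDegree_le_of_forall_degree_le {p : MvPolynomial σ k} {d : ℕ}
    (h : ∀ v ∈ p.support, v.degree ≤ d) : p.totalDegree ≤ d :=
  Finset.sup_le h

theorem exists_eq_X_mul_add {f : MvPolynomial σ k} {i₀ i₁ : σ}
    (hf : ∀ v ∈ f.support, v.degree ≤ 2 ∧ v i₀ + v i₁ ≤ 1) :
    ∃ A B : MvPolynomial σ k, f = X i₀ * A + B ∧
      (∀ w, A.coeff w = f.coeff (Finsupp.single i₀ 1 + w)) ∧ A.totalDegree ≤ 1 ∧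
      A.degreeOf i₀ = 0 ∧ A.degreeOf i₁ = 0 ∧ B.degreeOf i₀ = 0 ∧ B.degreeOf i₁ ≤ 1 := by
  set A := f.divMonomial (Finsupp.single i₀ 1)
  set B := f.modMonomial (Finsupp.single i₀ 1)
  have hA : ∀ w ∈ A.support, w.degree ≤ 1 ∧ w i₀ = 0 ∧ w i₁ = 0 := fun w hw => by
    rw [mem_support_iff, coeff_divMonomial, ← mem_support_iff] at hw
    have := hf _ hw
    simp only [map_add, Finsupp.degree_single, Finsupp.coe_add, Pi.add_apply,
      Finsupp.single_eq_same] at this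
    omega
  have hB : ∀ w ∈ B.support, w i₀ = 0 ∧ w i₁ ≤ 1 := fun w hw => by
    have hle : ¬ Finsupp.single i₀ 1 ≤ w := fun h =>
      mem_support_iff.mp hw (coeff_modMonomial_of_le f h)
    rw [mem_support_iff, coeff_modMonomial_of_not_le f hle, ← mem_support_iff] at hw
    rw [Finsupp.single_le_iff] at hle
    have := hf w hw
    omega
  refine ⟨A, B, (divMonomial_add_modMonomial_single f i₀).symm, fun w => coeff_divMonomial _ _ _,
    totalDegree_le_of_forall_degree_le fun w hw => (hA w hw).1, ?_, ?_, ?_,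
    degreeOf_le_iff.mpr fun w hw => (hB w hw).2⟩
  · exact Nat.le_zero.mp (degreeOf_le_iff.mpr fun w hw => (hA w hw).2.1.le)
  · exact Nat.le_zero.mp (degreeOf_le_iff.mpr fun w hw => (hA w hw).2.2.le)
  · exact Nat.le_zero.mp (degreeOf_le_iff.mpr fun w hw => (hB w hw).1.le)

theorem degreeOf_mul_sub_mul_le (i : σ) (A B A' B' : MvPolynomial σ k) :
    (A' * B - A * B').degreeOf i ≤
      max (A'.degreeOf i + B.degreeOf i) (A.degreeOf i + B'.degreeOf i) :=
  (degreeOf_sub_le _ _ _).trans (max_le_max (degreeOf_mul_le _ _ _) (degreeOf_mul_le _ _ _))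

theorem prime_of_totalDegree_eq_one {A : MvPolynomial σ k} (hA : A.totalDegree = 1) : Prime A := by
  refine UniqueFactorizationMonoid.irreducible_iff_prime.mp
    (irreducible_of_totalDegree_eq_one hA fun x hx => ?_)
  obtain ⟨w, hw⟩ : ∃ w, A.coeff w ≠ 0 := ne_zero_iff.mp (by rintro rfl; simp at hA)
  exact isUnit_iff_ne_zero.mpr (by rintro rfl; exact hw (zero_dvd_iff.mp (hx w)))

theorem not_dvd_of_coeff_eq_zero {A B : MvPolynomial σ k} {w : σ →₀ ℕ} (hA : A.totalDegree = 1)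
    (hB : B.totalDegree ≤ 1) (hB0 : B ≠ 0) (hAw : A.coeff w ≠ 0) (hBw : B.coeff w = 0) :
    ¬ A ∣ B := by
  rintro ⟨t, rfl⟩
  have ht0 : t ≠ 0 := by rintro rfl; simp at hB0
  have hA0 : A ≠ 0 := by rintro rfl; simp at hA
  have ht : t.totalDegree = 0 := by
    rw [totalDegree_mul_of_isDomain hA0 ht0] at hB
    omega
  obtain ⟨c, rfl⟩ : ∃ c, t = C c := ⟨_, totalDegree_eq_zero_iff_eq_C.mp ht⟩
  rw [mul_comm, coeff_C_mul] at hBw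
  exact mul_ne_zero (by simpa using ht0) hAw hBw

theorem not_dvd_of_forall_two_le_totalDegree {P : Ideal (MvPolynomial σ k)} (hP : P.IsPrime)
    (hP2 : ∀ g ∈ P, g ≠ 0 → 2 ≤ g.totalDegree) {A f : MvPolynomial σ k}
    (hA : A.totalDegree = 1) (hf : f ∈ P) (hf0 : f ≠ 0) (hf2 : f.totalDegree ≤ 2) : ¬ A ∣ f := by
  rintro ⟨s, rfl⟩
  have hA0 : A ≠ 0 := by rintro rfl; simp at hA
  have hs0 : s ≠ 0 := by rintro rfl; simp at hf0
  rw [totalDegree_mul_of_isDomain hA0 hs0, hA] at hf2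
  rcases hP.mem_or_mem hf with hAP | hsP
  · have := hP2 A hAP hA0; omega
  · have := hP2 s hsP hs0; omega

end MvPolynomial

namespace Paper

variable {k : Type*} [Field k] {n : ℕ}

theorem leadExp_eq_degree (m : MonomialOrder (Fin n)) (f : MvPolynomial (Fin n) k) :
    leadExp m f = m.degree f :=
  rfl

theorem initialIdeal_eq_span (m : MonomialOrder (Fin n)) (P : Ideal (MvPolynomial (Fin n) k)) :
    initialIdeal m P =
      Ideal.span ((fun d => monomial d (1 : k)) '' {d | ∃ f ∈ P, f ≠ 0 ∧ m.degree f = d}) := by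
  unfold initialIdeal
  congr 1
  ext g
  simp only [leadExp_eq_degree, Set.mem_image]
  constructor
  · rintro ⟨f, hf, hf0, rfl⟩
    exact ⟨_, ⟨f, hf, hf0, rfl⟩, rfl⟩
  · rintro ⟨_, ⟨f, hf, hf0, rfl⟩, rfl⟩
    exact ⟨f, hf, hf0, rfl⟩

theorem monomial_mem_initialIdeal_iff {m : MonomialOrder (Fin n)}
    {P : Ideal (MvPolynomial (Fin n) k)} {u : Fin n →₀ ℕ} :
    monomial u (1 : k) ∈ initialIdeal m P ↔ ∃ f ∈ P, f ≠ 0 ∧ m.degree f ≤ u := by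
  rw [initialIdeal_eq_span, monomial_mem_span_monomial_image_iff]
  constructor
  · rintro ⟨_, ⟨f, hf, hf0, rfl⟩, hle⟩
    exact ⟨f, hf, hf0, hle⟩
  · rintro ⟨f, hf, hf0, hle⟩
    exact ⟨_, ⟨f, hf, hf0, rfl⟩, hle⟩

namespace IsDegRevLex

variable {m : MonomialOrder (Fin n)}

theorem toSyn_lt_iff (hm : IsDegRevLex m) {a b : Fin n →₀ ℕ} :
    m.toSyn a < m.toSyn b ↔ a.degree < b.degree ∨
      (a.degree = b.degree ∧ ∃ i, b i < a i ∧ ∀ j, i < j → a j = b j) :=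
  hm a b

theorem degree_le_two_of_toSyn_le (hm : IsDegRevLex m) {i₀ i₁ j : Fin n} (h01 : i₀ ≠ i₁)
    (h0 : i₀ < j) (h1 : i₁ < j) {v : Fin n →₀ ℕ}
    (hv : m.toSyn v ≤ m.toSyn (Finsupp.single i₀ 1 + Finsupp.single j 1)) :
    v.degree ≤ 2 ∧ v i₀ + v i₁ ≤ 1 := by
  by_contra hcon
  refine hv.not_gt (hm.toSyn_lt_iff.mpr ?_)
  have hu : (Finsupp.single i₀ 1 + Finsupp.single j 1).degree = 2 := by simp
  rcases le_or_gt v.degree 2 with hdeg | hdeg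
  · have hpair : v i₀ + v i₁ ≤ v.degree := by
      simpa [Finset.sum_pair h01] using v.sum_le_degree {i₀, i₁}
    have hzero : ∀ l, l ≠ i₀ → l ≠ i₁ → v l = 0 := fun l hl0 hl1 => by
      have := v.sum_le_degree {l, i₀, i₁}
      rw [Finset.sum_insert (by simp [hl0, hl1]), Finset.sum_pair h01] at this
      omega
    right
    refine ⟨by omega, j, ?_, fun l hl => ?_⟩
    · simp [hzero j h0.ne' h1.ne', h0.ne]
    · simp [hzero l (h0.trans hl).ne' (h1.trans hl).ne', (h0.trans hl).ne, hl.ne]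
  · exact Or.inl (by omega)

theorem single_add_single_lt (hm : IsDegRevLex m) {a j l : Fin n} (ha : a < l) (hj : j < l) :
    m.toSyn (Finsupp.single a 1 + Finsupp.single l 1) <
      m.toSyn (Finsupp.single a 1 + Finsupp.single j 1) :=
  hm.toSyn_lt_iff.mpr <| Or.inr ⟨by simp, l, by simp [ha.ne, hj.ne], fun l' hl' => by
    simp [(ha.trans hl').ne, (hj.trans hl').ne, hl'.ne]⟩

end IsDegRevLex

theorem borelCond_span_monomial_image {G : Set (Fin n →₀ ℕ)}
    (hG : ∀ e ∈ G, ∀ i j : Fin n, i < j → e j ≠ 0 →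
      ∃ s, ∃ e' ∈ G, e' ≤ e + Finsupp.single i s - Finsupp.single j 1) :
    BorelCond (Ideal.span ((fun d => monomial d (1 : k)) '' G)) := by
  intro i j hij d hd hdj
  obtain ⟨e, heG, hed⟩ := monomial_mem_span_monomial_image_iff.mp hd
  by_cases hej : e j = 0
  · refine ⟨0, monomial_mem_span_monomial_image_iff.mpr ⟨e, heG, fun l => ?_⟩⟩
    by_cases hl : l = j
    · subst hl; simp [hej]
    · simpa [Finsupp.single_apply, Ne.symm hl] using hed l
  · obtain ⟨s, e', he'G, he'⟩ := hG e heG i j hij hej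
    exact ⟨s, monomial_mem_span_monomial_image_iff.mpr
      ⟨e', he'G, he'.trans (tsub_le_tsub_right (add_le_add hed le_rfl) _)⟩⟩

variable (k) in
noncomputable def borelExample (i₀ i₁ i₂ i₃ : Fin n) : Ideal (MvPolynomial (Fin n) k) :=
  Ideal.span {X i₀ ^ 2, X i₀ * X i₁, X i₁ ^ 2, X i₀ * X i₂, X i₀ * X i₃}

def borelExampleExps (i₀ i₁ i₂ i₃ : Fin n) : Set (Fin n →₀ ℕ) :=
  {Finsupp.single i₀ 2, Finsupp.single i₀ 1 + Finsupp.single i₁ 1, Finsupp.single i₁ 2,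
    Finsupp.single i₀ 1 + Finsupp.single i₂ 1, Finsupp.single i₀ 1 + Finsupp.single i₃ 1}

variable {i₀ i₁ i₂ i₃ : Fin n}

theorem borelExample_eq_span :
    borelExample k i₀ i₁ i₂ i₃ =
      Ideal.span ((fun d => monomial d (1 : k)) '' borelExampleExps i₀ i₁ i₂ i₃) := by
  simp only [borelExample, borelExampleExps, Set.image_insert_eq, Set.image_singleton,
    X_pow_eq_monomial]
  simp only [X, monomial_mul, mul_one]

theorem monomial_mem_borelExample_iff {d : Fin n →₀ ℕ} :
    monomial d (1 : k) ∈ borelExample k i₀ i₁ i₂ i₃ ↔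
      ∃ e ∈ borelExampleExps i₀ i₁ i₂ i₃, e ≤ d := by
  rw [borelExample_eq_span, monomial_mem_span_monomial_image_iff]

theorem degree_eq_two_of_mem_borelExampleExps {e : Fin n →₀ ℕ}
    (he : e ∈ borelExampleExps i₀ i₁ i₂ i₃) : e.degree = 2 := by
  rcases he with rfl | rfl | rfl | rfl | rfl <;> simp

theorem one_le_or_two_le_of_mem_borelExampleExps {e : Fin n →₀ ℕ}
    (he : e ∈ borelExampleExps i₀ i₁ i₂ i₃) : 1 ≤ e i₀ ∨ 2 ≤ e i₁ := by
  rcases he with rfl | rfl | rfl | rfl | rfl <;> simp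

theorem exists_le_of_mem_borelExampleExps (h₀ : i₀.val = 0) (h₁ : i₁.val = 1) (h₂ : i₂.val = 2)
    (h₃ : i₃.val = 3) {e : Fin n →₀ ℕ} (he : e ∈ borelExampleExps i₀ i₁ i₂ i₃) {i j : Fin n}
    (hij : i < j) (hej : e j ≠ 0) :
    ∃ e' ∈ borelExampleExps i₀ i₁ i₂ i₃, e' ≤ e + Finsupp.single i 2 - Finsupp.single j 1 := by
  rw [Fin.lt_def] at hij
  have hj : j.val ≤ 3 := by
    rcases he with rfl | rfl | rfl | rfl | rfl <;>
      simp only [Finsupp.coe_add, Pi.add_apply, Finsupp.single_apply, Fin.ext_iff] at hej <;>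
      split_ifs at hej <;> omega
  refine ⟨Finsupp.single i₀ 1 + Finsupp.single i 1, ?_, fun l => ?_⟩
  · rcases (by omega : i.val = 0 ∨ i.val = 1 ∨ i.val = 2) with hi | hi | hi
    · rw [show i = i₀ from Fin.ext (hi.trans h₀.symm), ← Finsupp.single_add]
      exact Or.inl rfl
    · rw [show i = i₁ from Fin.ext (hi.trans h₁.symm)]
      exact Or.inr (Or.inl rfl)
    · rw [show i = i₂ from Fin.ext (hi.trans h₂.symm)]
      exact Or.inr (Or.inr (Or.inr (Or.inl rfl)))
  · rcases he with rfl | rfl | rfl | rfl | rfl <;>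
      simp only [Finsupp.coe_add, Finsupp.coe_tsub, Pi.add_apply, Pi.sub_apply,
        Finsupp.single_apply, Fin.ext_iff] at hej ⊢ <;>
      split_ifs at hej ⊢ <;> omega

theorem isBorelType_borelExample (h₀ : i₀.val = 0) (h₁ : i₁.val = 1) (h₂ : i₂.val = 2)
    (h₃ : i₃.val = 3) : IsBorelType (borelExample k i₀ i₁ i₂ i₃) := by
  rw [borelExample_eq_span]
  exact ⟨⟨_, rfl⟩, borelCond_span_monomial_image fun e he i j hij hej =>
    ⟨2, exists_le_of_mem_borelExampleExps h₀ h₁ h₂ h₃ he hij hej⟩⟩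

section PrimeIdeal

variable {m : MonomialOrder (Fin n)} {P : Ideal (MvPolynomial (Fin n) k)}

theorem exists_le_degree_of_mem (hPI : initialIdeal m P = borelExample k i₀ i₁ i₂ i₃)
    {g : MvPolynomial (Fin n) k} (hg : g ∈ P) (hg0 : g ≠ 0) :
    ∃ e ∈ borelExampleExps i₀ i₁ i₂ i₃, e ≤ m.degree g :=
  monomial_mem_borelExample_iff.mp (hPI ▸ monomial_mem_initialIdeal_iff.mpr ⟨g, hg, hg0, le_rfl⟩)

theorem exists_mem_degree_eq (hPI : initialIdeal m P = borelExample k i₀ i₁ i₂ i₃)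
    {u : Fin n →₀ ℕ} (hu : u ∈ borelExampleExps i₀ i₁ i₂ i₃) :
    ∃ f ∈ P, f ≠ 0 ∧ m.degree f = u := by
  obtain ⟨f, hf, hf0, hfu⟩ := monomial_mem_initialIdeal_iff.mp
    (hPI ▸ monomial_mem_borelExample_iff.mpr ⟨u, hu, le_rfl⟩)
  obtain ⟨e, he, hef⟩ := exists_le_degree_of_mem hPI hf hf0
  refine ⟨f, hf, hf0, Finsupp.eq_of_le_of_degree_le hfu ?_⟩
  rw [degree_eq_two_of_mem_borelExampleExps hu, ← degree_eq_two_of_mem_borelExampleExps he]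
  exact Finsupp.degree_mono hef

theorem two_le_totalDegree_of_mem (hPI : initialIdeal m P = borelExample k i₀ i₁ i₂ i₃)
    {g : MvPolynomial (Fin n) k} (hg : g ∈ P) (hg0 : g ≠ 0) : 2 ≤ g.totalDegree := by
  obtain ⟨e, he, hle⟩ := exists_le_degree_of_mem hPI hg hg0
  calc 2 = e.degree := (degree_eq_two_of_mem_borelExampleExps he).symm
    _ ≤ (m.degree g).degree := Finsupp.degree_mono hle
    _ ≤ g.totalDegree := le_totalDegree (m.degree_mem_support hg0)

theorem eq_zero_of_mem_of_degreeOf_le (hPI : initialIdeal m P = borelExample k i₀ i₁ i₂ i₃)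
    {g : MvPolynomial (Fin n) k} (hg : g ∈ P) (h₀ : g.degreeOf i₀ = 0) (h₁ : g.degreeOf i₁ ≤ 1) :
    g = 0 := by
  by_contra hg0
  obtain ⟨e, he, hle⟩ := exists_le_degree_of_mem hPI hg hg0
  have hd₀ := monomial_le_degreeOf i₀ (m.degree_mem_support hg0)
  have hd₁ := monomial_le_degreeOf i₁ (m.degree_mem_support hg0)
  have he₀ := hle i₀
  have he₁ := hle i₁
  rcases one_le_or_two_le_of_mem_borelExampleExps he with h | h <;> omega

end PrimeIdeal

theorem initialIdeal_ne_borelExample {m : MonomialOrder (Fin n)} (hm : IsDegRevLex m)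
    {i₀ i₁ i₂ i₃ : Fin n} (h01 : i₀ ≠ i₁) (h02 : i₀ < i₂) (h12 : i₁ < i₂) (h23 : i₂ < i₃)
    {P : Ideal (MvPolynomial (Fin n) k)} (hP : P.IsPrime) :
    initialIdeal m P ≠ borelExample k i₀ i₁ i₂ i₃ := by
  intro hPI
  obtain ⟨f, hfP, hf0, hf⟩ := exists_mem_degree_eq hPI
    (u := Finsupp.single i₀ 1 + Finsupp.single i₂ 1) (by simp [borelExampleExps])
  obtain ⟨f', hf'P, hf'0, hf'⟩ := exists_mem_degree_eq hPI
    (u := Finsupp.single i₀ 1 + Finsupp.single i₃ 1) (by simp [borelExampleExps])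
  have hfsupp : ∀ v ∈ f.support, v.degree ≤ 2 ∧ v i₀ + v i₁ ≤ 1 := fun v hv =>
    hm.degree_le_two_of_toSyn_le h01 h02 h12 (hf ▸ m.le_degree hv)
  obtain ⟨A, B, hfAB, hA, hAdeg, hA₀, hA₁, hB₀, hB₁⟩ := exists_eq_X_mul_add hfsupp
  obtain ⟨A', B', hf'AB, hA', hA'deg, hA'₀, hA'₁, hB'₀, hB'₁⟩ := exists_eq_X_mul_add fun v hv =>
    hm.degree_le_two_of_toSyn_le h01 (h02.trans h23) (h12.trans h23) (hf' ▸ m.le_degree hv)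
  -- eliminating `x_{i₀}` from `f` and `f'` leaves an element of `P` whose leading monomial
  -- is divisible neither by `x_{i₀}` nor by `x_{i₁}²`
  have hcross : A' * f = A * f' := by
    have hdiff : A' * f - A * f' = A' * B - A * B' := by rw [hfAB, hf'AB]; ring
    have hmem : A' * B - A * B' ∈ P :=
      hdiff ▸ P.sub_mem (P.mul_mem_left _ hfP) (P.mul_mem_left _ hf'P)
    have h₀ := degreeOf_mul_sub_mul_le i₀ A B A' B'
    have h₁ := degreeOf_mul_sub_mul_le i₁ A B A' B'
    exact sub_eq_zero.mp (hdiff ▸ eq_zero_of_mem_of_degreeOf_le hPI hmem (by omega) (by omega))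
  have hAw : A.coeff (Finsupp.single i₂ 1) ≠ 0 := by
    rw [hA, ← hf]
    exact m.coeff_degree_ne_zero_iff.mpr hf0
  have hAdeg1 : A.totalDegree = 1 :=
    hAdeg.antisymm (by simpa using le_totalDegree (MvPolynomial.mem_support_iff.mpr hAw))
  have hA'w : A'.coeff (Finsupp.single i₂ 1) = 0 := by
    rw [hA']
    exact m.coeff_eq_zero_of_lt (hf' ▸ hm.single_add_single_lt (h02.trans h23) h23)
  have hA'0 : A' ≠ 0 := by
    rintro rfl
    have := hA' (Finsupp.single i₃ 1)
    rw [coeff_zero, ← hf'] at this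
    exact m.coeff_degree_ne_zero_iff.mpr hf'0 this.symm
  have hAA' : ¬ A ∣ A' := not_dvd_of_coeff_eq_zero hAdeg1 hA'deg hA'0 hAw hA'w
  have hAf : ¬ A ∣ f := not_dvd_of_forall_two_le_totalDegree hP
    (fun _ => two_le_totalDegree_of_mem hPI) hAdeg1 hfP hf0
    (totalDegree_le_of_forall_degree_le fun v hv => (hfsupp v hv).1)
  exact ((prime_of_totalDegree_eq_one hAdeg1).dvd_or_dvd ⟨f', hcross⟩).elim hAA' hAf

end Paper

open Paper MvPolynomial

/-- For `n ≥ 4`, the ideal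
`J = (x_1², x_1x_2, x_2², x_1x_3, x_1x_4)` is of Borel type, yet it is not the
initial ideal, with respect to the graded reverse lexicographic order, of any
homogeneous prime ideal of `k[x_1,…,x_n]`. -/
theorem stmt16 {k : Type*} [Field k] {n : ℕ} (hn : 4 ≤ n)
    (m : MonomialOrder (Fin n)) (hm : IsDegRevLex m)
    (J : Ideal (MvPolynomial (Fin n) k))
    (hJ : J = Ideal.span
      {(X (⟨0, by omega⟩ : Fin n) : MvPolynomial (Fin n) k) ^ 2,
        X (⟨0, by omega⟩ : Fin n) * X (⟨1, by omega⟩ : Fin n),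
        X (⟨1, by omega⟩ : Fin n) ^ 2,
        X (⟨0, by omega⟩ : Fin n) * X (⟨2, by omega⟩ : Fin n),
        X (⟨0, by omega⟩ : Fin n) * X (⟨3, by omega⟩ : Fin n)}) :
    IsBorelType J ∧
    ¬ ∃ P : Ideal (MvPolynomial (Fin n) k), P.IsPrime ∧ IsHomogIdeal P ∧
        initialIdeal m P = J := by
  change J = borelExample k ⟨0, by omega⟩ ⟨1, by omega⟩ ⟨2, by omega⟩ ⟨3, by omega⟩ at hJ
  subst hJ
  refine ⟨isBorelType_borelExample rfl rfl rfl rfl, fun ⟨P, hP, _, hPI⟩ => ?_⟩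
  exact initialIdeal_ne_borelExample hm (by simp) (by simp [Fin.lt_def]) (by simp [Fin.lt_def])
    (by simp [Fin.lt_def]) hP hPI
end

section
/- Let J be a monomial ideal of Borel type in S = k[x_1,...,x_n] with dim(S/J) = d and c = n − d. Then the radical of J contains x_1,...,x_c and does not contain any of x_{c+1},...,x_n; equivalently, J contains pure powers of x_1,...,x_c but no pure power of x_{c+1},...,x_n. -/
open MvPolynomial Finsupp Module

open Paper MvPolynomial

/-! A Borel move `x^a ↦ x_i^s x^a / x_j` (`i < j`) stays in `J` and strictly lowers the part of
the exponent outside `x_i`; iterating it from a monomial of `J` whose smallest variable is `x_i`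
produces a pure power of `x_i` in `J`. Hence the set `A` of variables with a pure power in `J`
is an initial segment, every monomial generator of `J` is divisible by a variable of `A`, and
`√J` is the prime ideal `(x_i : i ∈ A)`. Therefore `dim S/J = dim S/√J = n - |A|`, which forces
`A = {x_1, …, x_{n-d}}`. -/

namespace MvPolynomial

variable {σ τ R : Type*} [CommRing R]

theorem ker_killCompl {f : τ → σ} (hf : Function.Injective f) :
    RingHom.ker (killCompl (R := R) hf) = Ideal.span (X '' (Set.range f)ᶜ) := by
  refine le_antisymm (fun p hp => ?_) ?_
  · have hsub : ∀ q : MvPolynomial σ R,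
        q - rename f (killCompl hf q) ∈ Ideal.span (X '' (Set.range f)ᶜ) := by
      intro q
      induction q using MvPolynomial.induction_on with
      | C a => simp
      | add p q hp hq => simpa [add_sub_add_comm] using Ideal.add_mem _ hp hq
      | mul_X p i hp =>
        by_cases hi : i ∈ Set.range f
        · obtain ⟨j, rfl⟩ := hi
          have : rename f (killCompl hf (X (f j) : MvPolynomial σ R)) = X (f j) := by
            rw [← rename_X (R := R) f j, killCompl_rename_app]
          rw [map_mul, map_mul, this, ← sub_mul]
          exact Ideal.mul_mem_right _ _ hp
        · have : killCompl hf (X i : MvPolynomial σ R) = 0 := by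
            simp [killCompl, dif_neg hi]
          rw [map_mul, this, mul_zero, map_zero, sub_zero]
          exact Ideal.mul_mem_left _ _ (Ideal.subset_span ⟨i, hi, rfl⟩)
    simpa [RingHom.mem_ker.1 hp] using hsub p
  · rw [Ideal.span_le]
    rintro - ⟨i, hi, rfl⟩
    simp [killCompl, dif_neg hi]

theorem X_mem_span_X_image_iff [Nontrivial R] {s : Set σ} {i : σ} :
    (X i : MvPolynomial σ R) ∈ Ideal.span (X '' s) ↔ i ∈ s := by
  simp [mem_ideal_span_X_image, support_X, Finsupp.single_apply_eq_zero]

theorem isPrime_span_X_image [IsDomain R] (s : Set σ) :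
    (Ideal.span (X '' s : Set (MvPolynomial σ R))).IsPrime := by
  have := ker_killCompl (R := R) (Subtype.val_injective (p := (· ∈ sᶜ)))
  rw [Subtype.range_coe, compl_compl] at this
  exact this ▸ RingHom.ker_isPrime _

theorem ringKrullDim_quotient_span_X_image [IsNoetherianRing R] [Finite σ] (s : Set σ) :
    ringKrullDim (MvPolynomial σ R ⧸ Ideal.span (X '' s : Set (MvPolynomial σ R))) =
      ringKrullDim R + Nat.card ↥sᶜ := by
  have hf := Subtype.val_injective (p := (· ∈ sᶜ))
  have hker := ker_killCompl (R := R) hf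
  rw [Subtype.range_coe, compl_compl] at hker
  have hsurj : Function.Surjective (killCompl (R := R) hf) :=
    fun p => ⟨rename _ p, killCompl_rename_app hf p⟩
  rw [← hker, ringKrullDim_eq_of_ringEquiv
    (Ideal.quotientKerAlgEquivOfSurjective hsurj).toRingEquiv, ringKrullDim_of_isNoetherianRing]

end MvPolynomial

theorem ringKrullDim_quotient_radical {R : Type*} [CommRing R] (I : Ideal R) :
    ringKrullDim (R ⧸ I.radical) = ringKrullDim (R ⧸ I) := by
  rw [ringKrullDim_quotient, ringKrullDim_quotient, PrimeSpectrum.zeroLocus_radical]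

namespace Paper

variable {k : Type*} [Field k] {n : ℕ} {J : Ideal (MvPolynomial (Fin n) k)}

theorem BorelCond.exists_add_single_mem (hB : BorelCond J) {i j : Fin n} (hij : i < j)
    {a : Fin n →₀ ℕ} (ha : monomial (a + single j 1) (1 : k) ∈ J) :
    ∃ s, monomial (a + single i s) (1 : k) ∈ J := by
  obtain ⟨s, hs⟩ := hB i j hij _ ha (by simp)
  refine ⟨s, ?_⟩
  rwa [add_right_comm, add_tsub_cancel_right] at hs

theorem BorelCond.exists_single_mem (hB : BorelCond J) {i : Fin n} {b : Fin n →₀ ℕ}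
    (hb : ∀ l ∈ b.support, i < l) {t : ℕ} (ht : monomial (single i t + b) (1 : k) ∈ J) :
    ∃ s, monomial (single i s) (1 : k) ∈ J := by
  induction hdeg : b.degree generalizing b t with
  | zero =>
    rw [degree_eq_zero_iff] at hdeg
    exact ⟨t, by simpa [hdeg] using ht⟩
  | succ N ih =>
    obtain ⟨j, hj⟩ : b.support.Nonempty := by
      rw [support_nonempty_iff]; rintro rfl; simp at hdeg
    have hjb : single j 1 ≤ b := single_le_iff.2 (Nat.one_le_iff_ne_zero.2 (mem_support_iff.1 hj))
    rw [← tsub_add_cancel_of_le hjb, ← add_assoc] at ht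
    obtain ⟨s, hs⟩ := hB.exists_add_single_mem (hb j hj) ht
    rw [add_right_comm, ← single_add] at hs
    refine ih (fun l hl => hb l (support_mono tsub_le_self hl)) hs ?_
    have := congrArg degree (tsub_add_cancel_of_le hjb)
    rw [map_add, degree_single, hdeg] at this
    omega

def pureVars (J : Ideal (MvPolynomial (Fin n) k)) : Set (Fin n) :=
  {i | ∃ e, 0 < e ∧ (X i : MvPolynomial (Fin n) k) ^ e ∈ J}

theorem mem_pureVars_of_single_mem (hJ : J ≠ ⊤) {i : Fin n} {s : ℕ}
    (hs : monomial (single i s) (1 : k) ∈ J) : i ∈ pureVars J := by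
  refine ⟨s, Nat.pos_of_ne_zero ?_, by rwa [X_pow_eq_monomial]⟩
  rintro rfl
  exact hJ ((Ideal.eq_top_iff_one J).2 (by simpa using hs))

theorem BorelCond.isLowerSet_pureVars (hB : BorelCond J) (hJ : J ≠ ⊤) :
    IsLowerSet (pureVars J) := by
  intro j i hle ⟨e, he0, he⟩
  obtain rfl | hij := hle.eq_or_lt
  · exact ⟨e, he0, he⟩
  rw [X_pow_eq_monomial, ← zero_add (single j e), ← single_zero i] at he
  obtain ⟨s, hs⟩ := hB.exists_single_mem
    (fun l hl => (mem_support_single _ _ _ |>.1 hl).1 ▸ hij) he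
  exact mem_pureVars_of_single_mem hJ hs

theorem IsBorelType.le_span_X_pureVars (hB : IsBorelType J) (hJ : J ≠ ⊤) :
    J ≤ Ideal.span (X '' pureVars J) := by
  obtain ⟨⟨G, rfl⟩, hBorel⟩ := hB
  rw [Ideal.span_le]
  rintro - ⟨a, haG, rfl⟩
  have ha : monomial a (1 : k) ∈ Ideal.span ((fun d => monomial d 1) '' G) :=
    Ideal.subset_span ⟨a, haG, rfl⟩
  have hsupp : a.support.Nonempty := by
    rw [support_nonempty_iff]
    rintro rfl
    exact hJ ((Ideal.eq_top_iff_one _).2 (by simpa using ha))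
  set m := a.support.min' hsupp
  rw [← single_add_erase m a] at ha
  obtain ⟨s, hs⟩ := hBorel.exists_single_mem (fun l hl => by
    rw [support_erase, Finset.mem_erase] at hl
    exact lt_of_le_of_ne (a.support.min'_le l hl.2) (Ne.symm hl.1)) ha
  refine SetLike.mem_coe.2 (mem_ideal_span_X_image.2 fun b hb => ?_)
  rw [Finset.mem_singleton.1 (support_monomial_subset hb)]
  exact ⟨m, mem_pureVars_of_single_mem hJ hs, mem_support_iff.1 (a.support.min'_mem hsupp)⟩

theorem IsBorelType.radical_eq (hB : IsBorelType J) (hJ : J ≠ ⊤) :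
    J.radical = Ideal.span (X '' pureVars J) := by
  refine le_antisymm ((isPrime_span_X_image _).radical_le_iff.2 (hB.le_span_X_pureVars hJ)) ?_
  rw [Ideal.span_le]
  rintro - ⟨i, ⟨e, _, he⟩, rfl⟩
  exact ⟨e, he⟩

end Paper

theorem Fin.lt_sub_card_compl_iff_mem {n : ℕ} {A : Set (Fin n)} (hA : IsLowerSet A) (i : Fin n) :
    (i : ℕ) < n - Nat.card ↥Aᶜ ↔ i ∈ A := by
  classical
  rw [Nat.card_coe_set_eq]
  constructor
  · intro hi
    by_contra hiA
    have : Set.Ici i ⊆ Aᶜ := fun j hj hjA => hiA (hA hj hjA)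
    have := Set.ncard_le_ncard this
    rw [← Finset.coe_Ici, Set.ncard_coe_finset, Fin.card_Ici] at this
    omega
  · intro hiA
    have : Aᶜ ⊆ Set.Ioi i := fun j hj => lt_of_not_ge fun hji => hj (hA hji hiA)
    have := Set.ncard_le_ncard this
    rw [← Finset.coe_Ioi, Set.ncard_coe_finset, Fin.card_Ioi] at this
    omega

/-- For a Borel-type monomial ideal `J` with `dim(S/J) = d` and
`c = n − d`, the radical of `J` contains exactly the variables `x_1,…,x_c`;
equivalently, `J` contains a pure power of `x_i` exactly when `i ≤ c`. -/
theorem stmt18 {k : Type*} [Field k] {n : ℕ}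
    (J : Ideal (MvPolynomial (Fin n) k)) (hB : IsBorelType J)
    (d : ℕ) (hd : qdim J = (d : WithBot (WithTop ℕ))) :
    (∀ i : Fin n, (X i : MvPolynomial (Fin n) k) ∈ J.radical ↔ (i : ℕ) < n - d) ∧
    (∀ i : Fin n, (i : ℕ) < n - d ↔ ∃ e : ℕ, 0 < e ∧ (X i : MvPolynomial (Fin n) k) ^ e ∈ J) := by
  have hJ : J ≠ ⊤ := by
    rintro rfl
    rw [qdim, ringKrullDim_eq_bot_of_subsingleton] at hd
    exact WithBot.bot_ne_coe hd
  have hrad := hB.radical_eq hJ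
  have hdim : d = Nat.card ↥(pureVars J)ᶜ := by
    rw [qdim, ← ringKrullDim_quotient_radical, hrad, ringKrullDim_quotient_span_X_image,
      ringKrullDim_eq_zero_of_field, zero_add] at hd
    exact Nat.cast_injective hd.symm
  have hseg := Fin.lt_sub_card_compl_iff_mem (hB.2.isLowerSet_pureVars hJ)
  subst hdim
  exact ⟨fun i => by rw [hrad, X_mem_span_X_image_iff, hseg], fun i => hseg i⟩
end
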